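/- arXiv:1006.3164 — 2 statements merged into one kernel-verified Lean document; each statement's English description precedes it below -/
import Mathlib

section
/- If ψ ∈ 𝒦 and g is a ψ-l.c.f., then ln g(x) = o(γ(x)) as x → ∞, where γ(x) = ∫₁^x dt/ψ(t). -/
/-!
Put `h = log ∘ g`, so that `h (x + v ψ x) - h x → 0` for every fixed `v`. A Steinhaus-type
measure argument makes this uniform in `v ∈ [0, 1]`: for large `x` and `y = x + w ψ x`, most
`v ∈ [-1, 1]` are good for `x` and most are good for `y`; since condition (A) bounds
`ψ y / ψ x`, some point `x + v ψ x = y + u ψ y` is reached through good `v` and `u`.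
Along the orbit `X, X + ψ X, …` the function `h` then moves by at most `ε` per step, while by
(A) again `γ` grows by at least `a 1` per step. Hence `|h x| ≤ A + (ε / a 1) γ x`, and `γ → ∞`.
-/

open Filter Real Asymptotics MeasureTheory Set
open scoped Topology

theorem tendstoInMeasure_of_tendsto_ae_of_isCountablyGenerated {α ι E : Type*}
    [MeasurableSpace α] {μ : Measure α} [IsFiniteMeasure μ] [PseudoEMetricSpace E]
    {l : Filter ι} [l.IsCountablyGenerated] {f : ι → α → E} {g : α → E}
    (hf : ∀ i, AEStronglyMeasurable (f i) μ)
    (hfg : ∀ᵐ x ∂μ, Tendsto (fun i => f i x) l (𝓝 (g x))) :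
    TendstoInMeasure μ f l g := fun ε hε =>
  tendsto_iff_seq_tendsto.2 fun u hu =>
    tendstoInMeasure_of_tendsto_ae (fun n => hf (u n)) (hfg.mono fun _ hx => hx.comp hu) ε hε

theorem exists_mem_Icc_notMem_of_volume_le {S T : Set ℝ} {c w δ : ℝ} (hc : 0 < c) (hδ : 0 ≤ δ)
    (hS : volume S ≤ ENNReal.ofReal δ) (hT : volume T ≤ ENNReal.ofReal δ)
    (hδc : δ + δ / c < 1) :
    ∃ v ∈ Icc (0:ℝ) 1, v ∉ S ∧ c * (v - w) ∉ T := by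
  set T' := (fun v => c * (v - w)) ⁻¹' T
  have hT' : volume T' ≤ ENNReal.ofReal (δ / c) := by
    have hT'_eq : T' = (· + -w) ⁻¹' ((c * ·) ⁻¹' T) := by
      ext v
      simp [T', sub_eq_add_neg]
    rw [hT'_eq, measure_preimage_add_right, Real.volume_preimage_mul_left hc.ne',
      abs_of_pos (inv_pos.2 hc), div_eq_inv_mul, ENNReal.ofReal_mul (inv_nonneg.2 hc.le)]
    gcongr
  by_contra! hcover
  have hsub : Icc (0:ℝ) 1 ⊆ S ∪ T' := fun v hv => by
    by_contra hvST
    simp only [mem_union, not_or] at hvST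
    exact hvST.2 (hcover v hv hvST.1)
  have hvol : ENNReal.ofReal 1 ≤ ENNReal.ofReal (δ + δ / c) :=
    calc ENNReal.ofReal 1 = volume (Icc (0:ℝ) 1) := by simp
      _ ≤ volume S + volume T' := (measure_mono hsub).trans (measure_union_le _ _)
      _ ≤ ENNReal.ofReal δ + ENNReal.ofReal (δ / c) := add_le_add hS hT'
      _ = ENNReal.ofReal (δ + δ / c) := (ENNReal.ofReal_add hδ (by positivity)).symm
  exact hδc.not_ge ((ENNReal.ofReal_le_ofReal_iff (by positivity)).1 hvol)

section Gamma

variable {ψ : ℝ → ℝ}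

theorem eventually_mul_le_apply_add_self {a : ℝ} (hψ_nonneg : ∀ x, 0 ≤ ψ x)
    (hψ_mono : Monotone ψ) (hA : ∀ᶠ x in atTop, a * ψ x ≤ ψ (x - ψ x)) :
    ∀ᶠ y in atTop, a * ψ (y + ψ y) ≤ ψ y := by
  have hle : ∀ y, y ≤ y + ψ y := fun y => le_add_of_nonneg_right (hψ_nonneg y)
  refine ((tendsto_atTop_mono hle tendsto_id).eventually hA).mono fun y hy => hy.trans ?_
  exact hψ_mono (by linarith [hψ_mono (hle y)])

theorem antitone_one_div (hψ_pos : ∀ x, 0 < ψ x) (hψ_mono : Monotone ψ) :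
    Antitone fun t => 1 / ψ t :=
  fun _ _ hst => one_div_le_one_div_of_le (hψ_pos _) (hψ_mono hst)

theorem intervalIntegrable_one_div (hψ_pos : ∀ x, 0 < ψ x) (hψ_mono : Monotone ψ) (p q : ℝ) :
    IntervalIntegrable (fun t => 1 / ψ t) volume p q :=
  (antitone_one_div hψ_pos hψ_mono).intervalIntegrable

theorem monotone_integral_one_div (hψ_pos : ∀ x, 0 < ψ x) (hψ_mono : Monotone ψ) :
    Monotone fun x => ∫ t in (1:ℝ)..x, 1 / ψ t := by
  intro p q hpq
  dsimp only
  have hnonneg : 0 ≤ ∫ t in p..q, 1 / ψ t :=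
    intervalIntegral.integral_nonneg hpq fun t _ => (one_div_pos.2 (hψ_pos t)).le
  have hint := intervalIntegrable_one_div hψ_pos hψ_mono
  rw [← intervalIntegral.integral_add_adjacent_intervals (hint 1 p) (hint p q)]
  linarith

theorem le_integral_one_div_sub {a y : ℝ} (hψ_pos : ∀ x, 0 < ψ x) (hψ_mono : Monotone ψ)
    (hy : a * ψ (y + ψ y) ≤ ψ y) :
    a ≤ (∫ t in (1:ℝ)..y + ψ y, 1 / ψ t) - ∫ t in (1:ℝ)..y, 1 / ψ t := by
  have hint := intervalIntegrable_one_div hψ_pos hψ_mono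
  rw [intervalIntegral.integral_interval_sub_left (hint _ _) (hint _ _)]
  calc a ≤ ψ y / ψ (y + ψ y) := (le_div_iff₀ (hψ_pos _)).2 hy
    _ = ∫ _ in y..y + ψ y, 1 / ψ (y + ψ y) := by
      rw [intervalIntegral.integral_const, smul_eq_mul, add_sub_cancel_left, mul_one_div]
    _ ≤ ∫ t in y..y + ψ y, 1 / ψ t :=
      intervalIntegral.integral_mono_on (le_add_of_nonneg_right (hψ_pos y).le) (by simp)
        (hint _ _) fun t ht => one_div_le_one_div_of_le (hψ_pos t) (hψ_mono ht.2)

end Gamma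

theorem tendsto_volume_setOf_le_abs_sub {ψ h : ℝ → ℝ} {ε : ℝ} (hh_meas : Measurable h)
    (hh : ∀ v, Tendsto (fun x => h (x + v * ψ x) - h x) atTop (𝓝 0)) (hε : 0 < ε) :
    Tendsto (fun x => volume ({v | ε ≤ |h (x + v * ψ x) - h x|} ∩ Icc (-1) 1)) atTop (𝓝 0) := by
  have hmeas : TendstoInMeasure (volume.restrict (Icc (-1:ℝ) 1))
      (fun x v => h (x + v * ψ x) - h x) atTop 0 :=
    tendstoInMeasure_of_tendsto_ae_of_isCountablyGenerated
      (fun x => ((hh_meas.comp (by fun_prop)).sub_const _).aestronglyMeasurable)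
      (ae_of_all _ hh)
  simpa [Measure.restrict_apply' measurableSet_Icc] using tendstoInMeasure_iff_norm.1 hmeas ε hε

theorem eventually_forall_Icc_abs_sub_le {ψ h : ℝ → ℝ} {a ε : ℝ}
    (hψ_pos : ∀ x, 0 < ψ x) (hψ_mono : Monotone ψ) (ha : 0 < a)
    (hψ_step : ∀ᶠ x in atTop, a * ψ (x + ψ x) ≤ ψ x) (hh_meas : Measurable h)
    (hh : ∀ v, Tendsto (fun x => h (x + v * ψ x) - h x) atTop (𝓝 0)) (hε : 0 < ε) :
    ∀ᶠ x in atTop, ∀ w ∈ Icc (0:ℝ) 1, |h (x + w * ψ x) - h x| ≤ ε := by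
  set bad : ℝ → Set ℝ := fun x => {v | ε / 2 ≤ |h (x + v * ψ x) - h x|} ∩ Icc (-1) 1
  set δ := a / (2 * (a + 1)) with hδ_def
  have hδ : 0 < δ := by positivity
  have hbad : ∀ᶠ x in atTop, volume (bad x) ≤ ENNReal.ofReal δ :=
    (tendsto_volume_setOf_le_abs_sub hh_meas hh (half_pos hε)).eventually
      (ge_mem_nhds (ENNReal.ofReal_pos.2 hδ))
  obtain ⟨X, hX⟩ := eventually_atTop.1 (hbad.and hψ_step)
  filter_upwards [eventually_ge_atTop X] with x hx w hw
  set y := x + w * ψ x with hy_def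
  set c := ψ x / ψ y
  have hxy : x ≤ y := le_add_of_nonneg_right (mul_nonneg hw.1 (hψ_pos x).le)
  have hc_pos : 0 < c := div_pos (hψ_pos x) (hψ_pos y)
  have hc_le : c ≤ 1 := div_le_one_of_le₀ (hψ_mono hxy) (hψ_pos y).le
  have hac : a ≤ c := by
    rw [le_div_iff₀ (hψ_pos y)]
    calc a * ψ y ≤ a * ψ (x + ψ x) := by
          gcongr
          exact hψ_mono (by nlinarith [hw.2, hψ_pos x])
      _ ≤ ψ x := (hX x hx).2
  have hδc : δ + δ / c < 1 := by
    have hδa : δ + δ / a = 1 / 2 := by rw [hδ_def]; field_simp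
    linarith [div_le_div_of_nonneg_left hδ.le ha hac]
  obtain ⟨v, hv, hv_good, hu_good⟩ := exists_mem_Icc_notMem_of_volume_le (w := w) hc_pos hδ.le
    (hX x hx).1 (hX y (hx.trans hxy)).1 hδc
  have hu : c * (v - w) ∈ Icc (-1:ℝ) 1 := by
    constructor <;> nlinarith [hv.1, hv.2, hw.1, hw.2]
  have hyu : y + c * (v - w) * ψ y = x + v * ψ x := by
    have hcψ : c * ψ y = ψ x := div_mul_cancel₀ _ (hψ_pos y).ne'
    linear_combination (v - w) * hcψ + hy_def
  have h₁ : |h (x + v * ψ x) - h x| < ε / 2 := by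
    simpa [bad, hv.2, (neg_one_lt_zero.trans_le hv.1).le] using hv_good
  have h₂ : |h (x + v * ψ x) - h y| < ε / 2 := by
    simpa [bad, hu, hyu] using hu_good
  rw [abs_lt] at h₁ h₂
  rw [abs_le]
  constructor <;> linarith

section Orbit

variable {ψ : ℝ → ℝ} {X : ℝ}

def psiOrbit (ψ : ℝ → ℝ) (X : ℝ) (n : ℕ) : ℝ := (fun x => x + ψ x)^[n] X

@[simp]
theorem psiOrbit_zero : psiOrbit ψ X 0 = X := rfl

theorem psiOrbit_succ (n : ℕ) : psiOrbit ψ X (n + 1) = psiOrbit ψ X n + ψ (psiOrbit ψ X n) :=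
  Function.iterate_succ_apply' _ _ _

theorem monotone_psiOrbit (hψ_nonneg : ∀ x, 0 ≤ ψ x) : Monotone (psiOrbit ψ X) :=
  monotone_nat_of_le_succ fun n => by
    rw [psiOrbit_succ]
    linarith [hψ_nonneg (psiOrbit ψ X n)]

theorem le_psiOrbit (hψ_nonneg : ∀ x, 0 ≤ ψ x) (n : ℕ) : X ≤ psiOrbit ψ X n :=
  monotone_psiOrbit hψ_nonneg n.zero_le

theorem add_mul_le_psiOrbit (hψ_nonneg : ∀ x, 0 ≤ ψ x) (hψ_mono : Monotone ψ) (n : ℕ) :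
    X + n * ψ X ≤ psiOrbit ψ X n := by
  induction n with
  | zero => simp
  | succ n ih =>
    rw [psiOrbit_succ]
    push_cast
    linarith [hψ_mono (le_psiOrbit (X := X) hψ_nonneg n)]

theorem exists_mem_Ico_psiOrbit (hψ_pos : ∀ x, 0 < ψ x) (hψ_mono : Monotone ψ) {x : ℝ}
    (hx : X ≤ x) : ∃ n, x ∈ Ico (psiOrbit ψ X n) (psiOrbit ψ X (n + 1)) := by
  have hψ_nonneg : ∀ x, 0 ≤ ψ x := fun x => (hψ_pos x).le
  have hunbdd : ¬BddAbove (range (psiOrbit ψ X)) := by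
    rintro ⟨B, hB⟩
    obtain ⟨n, hn⟩ := exists_nat_gt ((B - X) / ψ X)
    have := (add_mul_le_psiOrbit hψ_nonneg hψ_mono n).trans (hB (mem_range_self n))
    rw [div_lt_iff₀ (hψ_pos X)] at hn
    linarith
  have hcover := iUnion_Ico_map_succ_eq_Ici (fun n => le_psiOrbit (X := X) hψ_nonneg n) hunbdd
  have hx' : x ∈ Ici (psiOrbit ψ X ⊥) := hx
  rw [← hcover, mem_iUnion] at hx'
  simpa using hx'

end Orbit

section Steps

variable {ψ h G : ℝ → ℝ} {X δ c : ℝ}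

theorem abs_sub_psiOrbit_le (hψ_nonneg : ∀ x, 0 ≤ ψ x)
    (hh_step : ∀ y ≥ X, ∀ w ∈ Icc (0:ℝ) 1, |h (y + w * ψ y) - h y| ≤ δ) (n : ℕ) :
    |h (psiOrbit ψ X n) - h X| ≤ n * δ := by
  induction n with
  | zero => simp
  | succ n ih =>
    have hstep := hh_step _ (le_psiOrbit hψ_nonneg n) 1 (right_mem_Icc.2 zero_le_one)
    rw [one_mul, ← psiOrbit_succ] at hstep
    push_cast
    linarith [abs_sub_le (h (psiOrbit ψ X (n + 1))) (h (psiOrbit ψ X n)) (h X)]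

theorem mul_le_sub_psiOrbit (hψ_nonneg : ∀ x, 0 ≤ ψ x)
    (hG_step : ∀ y ≥ X, c ≤ G (y + ψ y) - G y) (n : ℕ) :
    n * c ≤ G (psiOrbit ψ X n) - G X := by
  induction n with
  | zero => simp
  | succ n ih =>
    have hstep := hG_step _ (le_psiOrbit hψ_nonneg n)
    rw [← psiOrbit_succ] at hstep
    push_cast
    linarith

theorem tendsto_atTop_of_eventually_le_sub (hψ_nonneg : ∀ x, 0 ≤ ψ x) (hG : Monotone G)
    (hc : 0 < c) (hG_step : ∀ᶠ y in atTop, c ≤ G (y + ψ y) - G y) :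
    Tendsto G atTop atTop := by
  obtain ⟨X, hX⟩ := eventually_atTop.1 hG_step
  refine tendsto_atTop_atTop_of_monotone hG fun b => ?_
  obtain ⟨n, hn⟩ := exists_nat_gt ((b - G X) / c)
  refine ⟨psiOrbit ψ X n, ?_⟩
  have := mul_le_sub_psiOrbit hψ_nonneg hX n
  rw [div_lt_iff₀ hc] at hn
  linarith

theorem abs_sub_le_add_div_mul_sub (hψ_pos : ∀ x, 0 < ψ x) (hψ_mono : Monotone ψ)
    (hG : Monotone G) (hc : 0 < c)
    (hh_step : ∀ y ≥ X, ∀ w ∈ Icc (0:ℝ) 1, |h (y + w * ψ y) - h y| ≤ δ)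
    (hG_step : ∀ y ≥ X, c ≤ G (y + ψ y) - G y) {x : ℝ} (hx : X ≤ x) :
    |h x - h X| ≤ δ + δ / c * (G x - G X) := by
  have hψ_nonneg : ∀ x, 0 ≤ ψ x := fun x => (hψ_pos x).le
  obtain ⟨n, hn_le, hn_lt⟩ := exists_mem_Ico_psiOrbit hψ_pos hψ_mono hx
  set y := psiOrbit ψ X n
  have hw : (x - y) / ψ y ∈ Icc (0:ℝ) 1 := by
    rw [psiOrbit_succ] at hn_lt
    constructor
    · exact div_nonneg (by linarith) (hψ_pos y).le
    · rw [div_le_one (hψ_pos y)]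
      linarith
  have hlast := hh_step y (le_psiOrbit hψ_nonneg n) _ hw
  rw [div_mul_cancel₀ _ (hψ_pos y).ne', add_sub_cancel] at hlast
  have hn : n * c ≤ G x - G X :=
    (mul_le_sub_psiOrbit hψ_nonneg hG_step n).trans (by linarith [hG hn_le])
  have hδ : 0 ≤ δ := (abs_nonneg _).trans hlast
  calc |h x - h X| ≤ |h x - h y| + |h y - h X| := abs_sub_le _ _ _
    _ ≤ δ + n * δ := add_le_add hlast (abs_sub_psiOrbit_le hψ_nonneg hh_step n)
    _ = δ + δ / c * (n * c) := by field_simp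
    _ ≤ δ + δ / c * (G x - G X) := by gcongr

end Steps

theorem isLittleO_of_forall_abs_le_add_mul {h G : ℝ → ℝ} (hG : Tendsto G atTop atTop)
    (hbound : ∀ C > 0, ∃ A, ∀ᶠ x in atTop, |h x| ≤ A + C * G x) : h =o[atTop] G := by
  refine isLittleO_iff.2 fun C hC => ?_
  obtain ⟨A, hA⟩ := hbound (C / 2) (half_pos hC)
  filter_upwards [hA, hG.eventually_ge_atTop (2 * A / C), hG.eventually_ge_atTop 0]
    with x hx hxA hx0
  rw [Real.norm_eq_abs, Real.norm_eq_abs, abs_of_nonneg hx0]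
  rw [div_le_iff₀ hC] at hxA
  linarith

theorem isLittleO_of_forall_abs_sub_le {ψ h G : ℝ → ℝ} {c : ℝ} (hψ_pos : ∀ x, 0 < ψ x)
    (hψ_mono : Monotone ψ) (hG : Monotone G) (hc : 0 < c)
    (hG_step : ∀ᶠ y in atTop, c ≤ G (y + ψ y) - G y)
    (hh_step : ∀ ε > 0, ∀ᶠ y in atTop, ∀ w ∈ Icc (0:ℝ) 1, |h (y + w * ψ y) - h y| ≤ ε) :
    h =o[atTop] G := by
  refine isLittleO_of_forall_abs_le_add_mul
    (tendsto_atTop_of_eventually_le_sub (fun x => (hψ_pos x).le) hG hc hG_step) fun C hC => ?_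
  obtain ⟨X, hX⟩ := eventually_atTop.1 ((hh_step (C * c) (by positivity)).and hG_step)
  refine ⟨|h X| + C * c - C * G X, eventually_atTop.2 ⟨X, fun x hx => ?_⟩⟩
  have := abs_sub_le_add_div_mul_sub hψ_pos hψ_mono hG hc (fun y hy => (hX y hy).1)
    (fun y hy => (hX y hy).2) hx
  rw [mul_div_cancel_right₀ _ hc.ne'] at this
  linarith [abs_sub_abs_le_abs_sub (h x) (h X)]

theorem psi_lcf_log_littleO_gamma_general (ψ a g : ℝ → ℝ)
    (hψ_one : ∀ x, 1 ≤ ψ x) (hψ_mono : Monotone ψ)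
    (ha_pos : ∀ v : ℝ, 0 < v → 0 < a v)
    (hA : ∀ v : ℝ, 0 < v → ∀ᶠ x in atTop, a v * ψ x ≤ ψ (x - v * ψ x))
    (hg_pos : ∀ x, 0 < g x) (hg_meas : Measurable g)
    (hg_lcf : ∀ v : ℝ, Tendsto (fun x => g (x + v * ψ x) / g x) atTop (𝓝 1)) :
    (fun x => Real.log (g x)) =o[atTop] (fun x => ∫ t in (1:ℝ)..x, 1 / ψ t) := by
  have hψ_pos : ∀ x, 0 < ψ x := fun x => one_pos.trans_le (hψ_one x)
  have ha : 0 < a 1 := ha_pos 1 one_pos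
  have hψ_step : ∀ᶠ y in atTop, a 1 * ψ (y + ψ y) ≤ ψ y :=
    eventually_mul_le_apply_add_self (fun x => (hψ_pos x).le) hψ_mono (by simpa using hA 1 one_pos)
  have hlog : ∀ v, Tendsto (fun x => log (g (x + v * ψ x)) - log (g x)) atTop (𝓝 0) := by
    intro v
    have := (continuousAt_log one_ne_zero).tendsto.comp (hg_lcf v)
    rw [log_one] at this
    refine this.congr fun x => ?_
    simp [log_div (hg_pos _).ne' (hg_pos x).ne']
  exact isLittleO_of_forall_abs_sub_le hψ_pos hψ_mono (monotone_integral_one_div hψ_pos hψ_mono) ha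
    (hψ_step.mono fun y hy => le_integral_one_div_sub hψ_pos hψ_mono hy) fun ε hε =>
      eventually_forall_Icc_abs_sub_le hψ_pos hψ_mono ha hψ_step (measurable_log.comp hg_meas)
        hlog hε

/-- If `ψ ∈ 𝒦` and `g` is a `ψ`-l.c.f., then `log g x = o(γ x)`
where `γ x = ∫₁^x dt/ψ t`. -/
theorem psi_lcf_log_littleO_gamma (ψ a g : ℝ → ℝ)
    (hψ_one : ∀ x, 1 ≤ ψ x) (hψ_mono : Monotone ψ)
    (hψ_small : Tendsto (fun x => ψ x / x) atTop (𝓝 0))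
    (ha_anti : AntitoneOn a (Set.Ioi 0))
    (ha_pos : ∀ v : ℝ, 0 < v → 0 < a v)
    (hA : ∀ v : ℝ, 0 < v → ∀ᶠ x in atTop, a v * ψ x ≤ ψ (x - v * ψ x))
    (ha_int : Tendsto (fun r => ∫ u in (0:ℝ)..r, a u) atTop atTop)
    (hg_pos : ∀ x, 0 < g x) (hg_meas : Measurable g)
    (hg_lcf : ∀ v : ℝ, Tendsto (fun x => g (x + v * ψ x) / g x) atTop (𝓝 1)) :
    (fun x => Real.log (g x)) =o[atTop] (fun x => ∫ t in (1:ℝ)..x, 1 / ψ t) :=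
  psi_lcf_log_littleO_gamma_general ψ a g hψ_one hψ_mono ha_pos hA hg_pos hg_meas hg_lcf
end

section
/- Let g be positive measurable and ψ ∈ 𝒦. Then g is a ψ-l.c.f. if and only if the composition g ∘ γ^{(−1)} is an l.c.f., where γ(x) = ∫₁^x dt/ψ(t) and γ^{(−1)} is its inverse. -/
/-!
Work with `G = log ∘ g`. The key ingredient is a uniform convergence theorem: if `G` is measurable
and `G (x + s Ψ x) - G x → 0` for every `s`, then `G x' - G x → 0` along any pair `x, x' → ∞` with
`|x' - x| = O(Ψ x)` and `Ψ x ≍ Ψ x'`. By Egorov the convergence is uniform in `s` off sets of small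
measure, so some `s ∈ [0, 1]` writes `x + s Ψ x = x' + σ Ψ x'` with both shifts good.

Condition (A) turns a step of fixed length in `γ` into a step `O(ψ)` between points with comparable
`ψ`, and conversely a step `v ψ x` has bounded `γ`-length. The theorem is the uniform convergence
theorem for `G` with `Ψ = ψ`, and for `G ∘ γ⁻¹` with `Ψ = 1`.
-/

open Filter Real MeasureTheory Set
open scoped Topology

noncomputable def psiGamma (ψ : ℝ → ℝ) (x : ℝ) : ℝ := ∫ t in (1:ℝ)..x, 1 / ψ t

section psiGamma

variable {ψ : ℝ → ℝ}

lemma antitone_one_div_of_monotone (hψ : ∀ x, 0 < ψ x) (hψ_mono : Monotone ψ) :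
    Antitone fun t => 1 / ψ t :=
  fun _ _ h => one_div_le_one_div_of_le (hψ _) (hψ_mono h)

lemma psiGamma_sub_psiGamma (hψ : ∀ x, 0 < ψ x) (hψ_mono : Monotone ψ) (x x' : ℝ) :
    psiGamma ψ x' - psiGamma ψ x = ∫ t in x..x', 1 / ψ t :=
  have hanti := antitone_one_div_of_monotone hψ hψ_mono
  intervalIntegral.integral_interval_sub_left hanti.intervalIntegrable hanti.intervalIntegrable

lemma div_le_psiGamma_sub (hψ : ∀ x, 0 < ψ x) (hψ_mono : Monotone ψ) {x x' : ℝ} (h : x ≤ x') :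
    (x' - x) / ψ x' ≤ psiGamma ψ x' - psiGamma ψ x := by
  have hanti := antitone_one_div_of_monotone hψ hψ_mono
  rw [psiGamma_sub_psiGamma hψ hψ_mono, div_eq_mul_one_div, ← smul_eq_mul,
    ← intervalIntegral.integral_const]
  exact intervalIntegral.integral_mono_on h intervalIntegrable_const hanti.intervalIntegrable
    fun t ht => hanti ht.2

lemma psiGamma_sub_le_div (hψ : ∀ x, 0 < ψ x) (hψ_mono : Monotone ψ) {x x' : ℝ} (h : x ≤ x') :
    psiGamma ψ x' - psiGamma ψ x ≤ (x' - x) / ψ x := by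
  have hanti := antitone_one_div_of_monotone hψ hψ_mono
  rw [psiGamma_sub_psiGamma hψ hψ_mono, div_eq_mul_one_div, ← smul_eq_mul,
    ← intervalIntegral.integral_const]
  exact intervalIntegral.integral_mono_on h hanti.intervalIntegrable intervalIntegrable_const
    fun t ht => hanti ht.1

lemma psiGamma_strictMono (hψ : ∀ x, 0 < ψ x) (hψ_mono : Monotone ψ) :
    StrictMono (psiGamma ψ) := fun x x' h => by
  have := div_le_psiGamma_sub hψ hψ_mono h.le
  have : 0 < (x' - x) / ψ x' := div_pos (sub_pos.2 h) (hψ x')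
  linarith

lemma psiGamma_one : psiGamma ψ 1 = 0 := intervalIntegral.integral_same

lemma psiGamma_nonneg (hψ : ∀ x, 0 < ψ x) (hψ_mono : Monotone ψ) {x : ℝ} (hx : 1 ≤ x) :
    0 ≤ psiGamma ψ x :=
  psiGamma_one (ψ := ψ) ▸ (psiGamma_strictMono hψ hψ_mono).monotone hx

lemma tendsto_add_mul_atTop (hψ_small : Tendsto (fun x => ψ x / x) atTop (𝓝 0)) (v : ℝ) :
    Tendsto (fun x => x + v * ψ x) atTop atTop := by
  have hlim : Tendsto (fun x => 1 + v * (ψ x / x)) atTop (𝓝 1) := by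
    simpa using (hψ_small.const_mul v).const_add 1
  refine (tendsto_id.atTop_mul_pos one_pos hlim).congr' ?_
  filter_upwards [eventually_gt_atTop 0] with x hx
  simp only [id]
  field_simp

lemma exists_eventually_abs_psiGamma_sub_le (hψ : ∀ x, 0 < ψ x) (hψ_mono : Monotone ψ)
    {a : ℝ → ℝ} (ha_pos : ∀ v : ℝ, 0 < v → 0 < a v)
    (hA : ∀ v : ℝ, 0 < v → ∀ᶠ x in atTop, a v * ψ x ≤ ψ (x - v * ψ x)) (v : ℝ) :
    ∃ T, ∀ᶠ x in atTop, |psiGamma ψ (x + v * ψ x) - psiGamma ψ x| ≤ T := by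
  rcases le_or_gt 0 v with hv | hv
  · refine ⟨v, Eventually.of_forall fun x => ?_⟩
    have hle : x ≤ x + v * ψ x := le_add_of_nonneg_right (mul_nonneg hv (hψ x).le)
    have hup := psiGamma_sub_le_div hψ hψ_mono hle
    rw [add_sub_cancel_left, mul_div_cancel_right₀ _ (hψ x).ne'] at hup
    rw [abs_of_nonneg (sub_nonneg.2 ((psiGamma_strictMono hψ hψ_mono).monotone hle))]
    exact hup
  · refine ⟨-v / a (-v), ?_⟩
    filter_upwards [hA (-v) (neg_pos.2 hv)] with x hx
    rw [neg_mul, sub_neg_eq_add] at hx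
    have hle : x + v * ψ x ≤ x :=
      add_le_of_nonpos_right (mul_nonpos_of_nonpos_of_nonneg hv.le (hψ x).le)
    have hup := psiGamma_sub_le_div hψ hψ_mono hle
    rw [abs_sub_comm,
      abs_of_nonneg (sub_nonneg.2 ((psiGamma_strictMono hψ hψ_mono).monotone hle))]
    refine hup.trans ?_
    rw [div_le_div_iff₀ (hψ _) (ha_pos _ (neg_pos.2 hv))]
    nlinarith [hψ x]

lemma abs_sub_le_and_comparable_of_psiGamma_sub_le (hψ : ∀ x, 0 < ψ x) (hψ_mono : Monotone ψ)
    {x x' u α : ℝ} (hxx' : x ≤ x') (hγ : psiGamma ψ x' - psiGamma ψ x ≤ u) (hα : 0 < α)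
    (hA : α * ψ x' ≤ ψ (x' - u * ψ x')) :
    |x' - x| ≤ u / α * ψ x ∧ min α 1 * ψ x' ≤ ψ x ∧ min α 1 * ψ x ≤ ψ x' := by
  have hstep : x' - x ≤ u * ψ x' :=
    (div_le_iff₀ (hψ x')).1 ((div_le_psiGamma_sub hψ hψ_mono hxx').trans hγ)
  have hratio : α * ψ x' ≤ ψ x := hA.trans (hψ_mono (by linarith))
  have hu : 0 ≤ u := (sub_nonneg.2 ((psiGamma_strictMono hψ hψ_mono).monotone hxx')).trans hγ
  refine ⟨?_, (mul_le_mul_of_nonneg_right (min_le_left α 1) (hψ x').le).trans hratio,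
    ((mul_le_of_le_one_left (hψ x).le (min_le_right α 1))).trans (hψ_mono hxx')⟩
  rw [abs_of_nonneg (sub_nonneg.2 hxx')]
  calc x' - x ≤ u * ψ x' := hstep
    _ = u / α * (α * ψ x') := by field_simp
    _ ≤ u / α * ψ x := mul_le_mul_of_nonneg_left hratio (div_nonneg hu hα.le)

end psiGamma

section gammaInv

variable {ψ γinv : ℝ → ℝ}

lemma monotoneOn_gammaInv (hψ : ∀ x, 0 < ψ x) (hψ_mono : Monotone ψ)
    (hγinv : ∀ y ≥ (0:ℝ), psiGamma ψ (γinv y) = y) :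
    MonotoneOn γinv (Ici 0) := fun y hy y' hy' h => by
  rwa [← (psiGamma_strictMono hψ hψ_mono).le_iff_le, hγinv y hy, hγinv y' hy']

lemma monotone_gammaInv_max (hψ : ∀ x, 0 < ψ x) (hψ_mono : Monotone ψ)
    (hγinv : ∀ y ≥ (0:ℝ), psiGamma ψ (γinv y) = y) :
    Monotone fun y => γinv (max y 0) := fun _ _ h =>
  monotoneOn_gammaInv hψ hψ_mono hγinv (mem_Ici.2 (le_max_right _ _))
    (mem_Ici.2 (le_max_right _ _)) (max_le_max_right 0 h)

lemma tendsto_gammaInv_atTop (hψ_one : ∀ x, 1 ≤ ψ x) (hψ_mono : Monotone ψ)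
    (hinv_right : ∀ y ≥ (0:ℝ), psiGamma ψ (γinv y) = y ∧ 1 ≤ γinv y) :
    Tendsto γinv atTop atTop := by
  have hψ : ∀ x, 0 < ψ x := fun x => one_pos.trans_le (hψ_one x)
  refine tendsto_atTop_mono' atTop ?_ (tendsto_atTop_add_const_right atTop 1 tendsto_id)
  filter_upwards [eventually_ge_atTop 0] with y hy
  obtain ⟨hγ, h1⟩ := hinv_right y hy
  have hup := psiGamma_sub_le_div hψ hψ_mono h1
  rw [hγ, psiGamma_one, sub_zero] at hup
  have := div_le_self (sub_nonneg.2 h1) (hψ_one 1)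
  simp only [id]
  linarith

lemma tendsto_psiGamma_atTop (hψ : ∀ x, 0 < ψ x) (hψ_mono : Monotone ψ)
    (hγinv : ∀ y ≥ (0:ℝ), psiGamma ψ (γinv y) = y) :
    Tendsto (psiGamma ψ) atTop atTop :=
  (psiGamma_strictMono hψ hψ_mono).monotone.tendsto_atTop_atTop fun b =>
    ⟨γinv (max b 0), by rw [hγinv _ (le_max_right b 0)]; exact le_max_left b 0⟩

lemma gammaInv_max_psiGamma (hψ : ∀ x, 0 < ψ x) (hψ_mono : Monotone ψ)
    (hinv_left : ∀ x ≥ (1:ℝ), γinv (psiGamma ψ x) = x) {x : ℝ} (hx : 1 ≤ x) :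
    γinv (max (psiGamma ψ x) 0) = x := by
  rw [max_eq_left (psiGamma_nonneg hψ hψ_mono hx), hinv_left x hx]

end gammaInv

section UniformConvergence

lemma exists_mem_Icc_notMem_affine {E F : Set ℝ} {c r : ℝ} (hc : 0 < c) (hcr : c ≤ r)
    (hE : volume E ≤ ENNReal.ofReal (1 / 3)) (hF : volume F ≤ ENNReal.ofReal (c / 3)) (t : ℝ) :
    ∃ s ∈ Icc (0:ℝ) 1, s ∉ E ∧ (s - t) * r ∉ F := by
  have hr : 0 < r := hc.trans_le hcr
  by_contra! h
  have hpre : volume ((fun s => (s - t) * r) ⁻¹' F) ≤ ENNReal.ofReal (1 / 3) := by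
    have hcomp : (fun s => (s - t) * r) ⁻¹' F = (fun s => s + -t) ⁻¹' ((· * r) ⁻¹' F) := by
      ext s; simp [sub_eq_add_neg]
    rw [hcomp, measure_preimage_add_right, Real.volume_preimage_mul_right hr.ne',
      abs_of_pos (inv_pos.2 hr)]
    calc ENNReal.ofReal r⁻¹ * volume F
        ≤ ENNReal.ofReal r⁻¹ * ENNReal.ofReal (c / 3) := by gcongr
      _ = ENNReal.ofReal (r⁻¹ * (c / 3)) := (ENNReal.ofReal_mul (inv_nonneg.2 hr.le)).symm
      _ ≤ ENNReal.ofReal (1 / 3) := by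
        gcongr
        rw [inv_mul_le_iff₀ hr]
        linarith
  have hcover : Icc (0:ℝ) 1 ⊆ E ∪ (fun s => (s - t) * r) ⁻¹' F := fun s hs =>
    (em (s ∈ E)).imp id (h s hs)
  have hvol := (measure_mono hcover).trans ((measure_union_le _ _).trans (add_le_add hE hpre))
  rw [Real.volume_Icc, ← ENNReal.ofReal_add (by norm_num) (by norm_num),
    ENNReal.ofReal_le_ofReal_iff (by norm_num)] at hvol
  norm_num at hvol

variable {G Ψ : ℝ → ℝ}

lemma exists_volume_le_tendstoUniformlyOn (hG_meas : Measurable G)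
    (hG : ∀ s, Tendsto (fun x => G (x + s * Ψ x) - G x) atTop (𝓝 0))
    {x : ℕ → ℝ} (hx : Tendsto x atTop atTop) (a b : ℝ) {δ : ℝ} (hδ : 0 < δ) :
    ∃ E, volume E ≤ ENNReal.ofReal δ ∧
      TendstoUniformlyOn (fun n s => G (x n + s * Ψ (x n)) - G (x n)) 0 atTop (Icc a b \ E) := by
  obtain ⟨E, -, -, hE, hunif⟩ := tendstoUniformlyOn_of_ae_tendsto (μ := volume)
    (fun n => ((hG_meas.comp ((measurable_id.mul_const _).const_add _)).sub
      measurable_const).stronglyMeasurable)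
    stronglyMeasurable_const measurableSet_Icc (by simp)
    (ae_of_all _ fun s _ => (hG s).comp hx) hδ
  exact ⟨E, hE, hunif⟩

lemma tendsto_comp_sub_comp_of_comparable_seq (hΨ : ∀ x, 0 < Ψ x) (hG_meas : Measurable G)
    (hG : ∀ s, Tendsto (fun x => G (x + s * Ψ x) - G x) atTop (𝓝 0))
    {x x' : ℕ → ℝ} (hx : Tendsto x atTop atTop) (hx' : Tendsto x' atTop atTop) {T c : ℝ}
    (hc : 0 < c) (hdist : ∀ᶠ n in atTop, |x' n - x n| ≤ T * Ψ (x n))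
    (hratio : ∀ᶠ n in atTop, c * Ψ (x' n) ≤ Ψ (x n) ∧ c * Ψ (x n) ≤ Ψ (x' n)) :
    Tendsto (fun n => G (x' n) - G (x n)) atTop (𝓝 0) := by
  set M := (1 + T) / c
  obtain ⟨E, hE, hunifE⟩ :=
    exists_volume_le_tendstoUniformlyOn hG_meas hG hx 0 1 (by norm_num : (0:ℝ) < 1 / 3)
  obtain ⟨F, hF, hunifF⟩ :=
    exists_volume_le_tendstoUniformlyOn hG_meas hG hx' (-M) M (by positivity : 0 < c / 3)
  rw [Metric.tendsto_nhds]
  intro ε hε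
  filter_upwards [hdist, hratio, Metric.tendstoUniformlyOn_iff.1 hunifE (ε / 2) (half_pos hε),
    Metric.tendstoUniformlyOn_iff.1 hunifF (ε / 2) (half_pos hε)] with n hd ⟨hr1, hr2⟩ hEn hFn
  have hΨx := hΨ (x n)
  have hΨx' := hΨ (x' n)
  set r := Ψ (x n) / Ψ (x' n)
  set t := (x' n - x n) / Ψ (x n)
  obtain ⟨s, hs, hsE, hsF⟩ :=
    exists_mem_Icc_notMem_affine hc ((le_div_iff₀ hΨx').2 hr1) hE hF t
  have hσ : |(s - t) * r| ≤ M := by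
    have hst : |s - t| ≤ 1 + T := by
      have ht : |t| ≤ T := by rwa [abs_div, abs_of_pos hΨx, div_le_iff₀ hΨx]
      have := abs_sub s t
      rw [abs_of_nonneg hs.1] at this
      linarith [hs.2]
    have hrc : r ≤ 1 / c := by
      rw [div_le_div_iff₀ hΨx' hc]
      linarith
    calc |(s - t) * r| = |s - t| * r := by rw [abs_mul, abs_of_pos (div_pos hΨx hΨx')]
      _ ≤ (1 + T) * (1 / c) :=
        mul_le_mul hst hrc (div_pos hΨx hΨx').le ((abs_nonneg _).trans hst)
      _ = M := (div_eq_mul_one_div _ _).symm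
  have hmeet : x' n + (s - t) * r * Ψ (x' n) = x n + s * Ψ (x n) := by
    simp only [r, t]
    field_simp
    ring
  have h1 := hEn s ⟨hs, hsE⟩
  have h2 := hFn _ ⟨abs_le.1 hσ, hsF⟩
  rw [hmeet] at h2
  simp only [Pi.zero_apply, dist_zero_left, Real.norm_eq_abs] at h1 h2
  rw [dist_zero_right, Real.norm_eq_abs]
  calc |G (x' n) - G (x n)|
      = |(G (x n + s * Ψ (x n)) - G (x n)) - (G (x n + s * Ψ (x n)) - G (x' n))| := by ring_nf
    _ ≤ |G (x n + s * Ψ (x n)) - G (x n)| + |G (x n + s * Ψ (x n)) - G (x' n)| := abs_sub _ _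
    _ < ε := by linarith

theorem tendsto_comp_sub_comp_of_comparable {α : Type*} {l : Filter α} [l.IsCountablyGenerated]
    (hΨ : ∀ x, 0 < Ψ x) (hG_meas : Measurable G)
    (hG : ∀ s, Tendsto (fun x => G (x + s * Ψ x) - G x) atTop (𝓝 0))
    {x x' : α → ℝ} (hx : Tendsto x l atTop) (hx' : Tendsto x' l atTop) {T c : ℝ}
    (hc : 0 < c) (hdist : ∀ᶠ i in l, |x' i - x i| ≤ T * Ψ (x i))
    (hratio : ∀ᶠ i in l, c * Ψ (x' i) ≤ Ψ (x i) ∧ c * Ψ (x i) ≤ Ψ (x' i)) :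
    Tendsto (fun i => G (x' i) - G (x i)) l (𝓝 0) :=
  tendsto_iff_seq_tendsto.2 fun _ hu =>
    tendsto_comp_sub_comp_of_comparable_seq hΨ hG_meas hG (hx.comp hu) (hx'.comp hu) hc
      (hu.eventually hdist) (hu.eventually hratio)

end UniformConvergence

lemma tendsto_add_sub_of_forall_pos {H : ℝ → ℝ}
    (h : ∀ u : ℝ, 0 < u → Tendsto (fun y => H (y + u) - H y) atTop (𝓝 0)) (v : ℝ) :
    Tendsto (fun y => H (y + v) - H y) atTop (𝓝 0) := by
  rcases lt_trichotomy v 0 with hv | rfl | hv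
  · have := ((h (-v) (neg_pos.2 hv)).comp (tendsto_atTop_add_const_right atTop v tendsto_id)).neg
    simpa using this
  · simp
  · exact h v hv

lemma tendsto_div_nhds_one_iff_log_sub {α : Type*} {l : Filter α} {g : ℝ → ℝ}
    (hg : ∀ x, 0 < g x) (f f' : α → ℝ) :
    Tendsto (fun i => g (f i) / g (f' i)) l (𝓝 1) ↔
      Tendsto (fun i => log (g (f i)) - log (g (f' i))) l (𝓝 0) := by
  constructor
  · intro h
    simpa [Function.comp_def, log_div (hg _).ne' (hg _).ne'] using
      (continuousAt_log one_ne_zero).tendsto.comp h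
  · intro h
    simpa [Function.comp_def, exp_sub, exp_log (hg _)] using (continuous_exp.tendsto 0).comp h

section Directions

variable {ψ a γinv G : ℝ → ℝ}

theorem tendsto_comp_gammaInv_sub_of_psi (hψ_one : ∀ x, 1 ≤ ψ x) (hψ_mono : Monotone ψ)
    (ha_pos : ∀ v : ℝ, 0 < v → 0 < a v)
    (hA : ∀ v : ℝ, 0 < v → ∀ᶠ x in atTop, a v * ψ x ≤ ψ (x - v * ψ x))
    (hinv_right : ∀ y ≥ (0:ℝ), psiGamma ψ (γinv y) = y ∧ 1 ≤ γinv y)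
    (hG_meas : Measurable G) (hG : ∀ s, Tendsto (fun x => G (x + s * ψ x) - G x) atTop (𝓝 0))
    (v : ℝ) : Tendsto (fun y => G (γinv (y + v)) - G (γinv y)) atTop (𝓝 0) := by
  have hψ : ∀ x, 0 < ψ x := fun x => one_pos.trans_le (hψ_one x)
  refine tendsto_add_sub_of_forall_pos (H := fun y => G (γinv y)) (fun u hu => ?_) v
  have hx := tendsto_gammaInv_atTop hψ_one hψ_mono hinv_right
  have hx' := hx.comp (tendsto_atTop_add_const_right atTop u tendsto_id)
  have hstep : ∀ᶠ y in atTop, |γinv (y + u) - γinv y| ≤ u / a u * ψ (γinv y) ∧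
      min (a u) 1 * ψ (γinv (y + u)) ≤ ψ (γinv y) ∧
      min (a u) 1 * ψ (γinv y) ≤ ψ (γinv (y + u)) := by
    filter_upwards [eventually_ge_atTop 0, hx'.eventually (hA u hu)] with y hy hAy
    have hyu : (0:ℝ) ≤ y + u := by linarith
    refine abs_sub_le_and_comparable_of_psiGamma_sub_le hψ hψ_mono
      (monotoneOn_gammaInv hψ hψ_mono (fun y hy => (hinv_right y hy).1) hy hyu (by linarith))
      ?_ (ha_pos u hu) hAy
    rw [(hinv_right _ hyu).1, (hinv_right _ hy).1, add_sub_cancel_left]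
  exact tendsto_comp_sub_comp_of_comparable hψ hG_meas hG hx hx' (lt_min (ha_pos u hu) one_pos)
    (hstep.mono fun _ h => h.1) (hstep.mono fun _ h => h.2)

theorem tendsto_psi_sub_of_comp_gammaInv (hψ_one : ∀ x, 1 ≤ ψ x) (hψ_mono : Monotone ψ)
    (hψ_small : Tendsto (fun x => ψ x / x) atTop (𝓝 0)) (ha_pos : ∀ v : ℝ, 0 < v → 0 < a v)
    (hA : ∀ v : ℝ, 0 < v → ∀ᶠ x in atTop, a v * ψ x ≤ ψ (x - v * ψ x))
    (hinv_left : ∀ x ≥ (1:ℝ), γinv (psiGamma ψ x) = x)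
    (hinv_right : ∀ y ≥ (0:ℝ), psiGamma ψ (γinv y) = y)
    (hG_meas : Measurable G)
    (hG : ∀ s, Tendsto (fun y => G (γinv (y + s)) - G (γinv y)) atTop (𝓝 0))
    (v : ℝ) : Tendsto (fun x => G (x + v * ψ x) - G x) atTop (𝓝 0) := by
  have hψ : ∀ x, 0 < ψ x := fun x => one_pos.trans_le (hψ_one x)
  -- `γinv` is only controlled on `[0, ∞)`; clamping makes `G ∘ γinv` measurable
  set H := fun y => G (γinv (max y 0))
  have hH_meas : Measurable H :=
    hG_meas.comp (monotone_gammaInv_max hψ hψ_mono hinv_right).measurable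
  have hH : ∀ s, Tendsto (fun y => H (y + s * 1) - H y) atTop (𝓝 0) := fun s => by
    refine (hG s).congr' ?_
    filter_upwards [eventually_ge_atTop (max 0 (-s))] with y hy
    simp only [H, mul_one, max_eq_left ((le_max_left _ _).trans hy),
      max_eq_left (neg_le_iff_add_nonneg.1 ((le_max_right _ _).trans hy))]
  obtain ⟨T, hT⟩ := exists_eventually_abs_psiGamma_sub_le hψ hψ_mono ha_pos hA v
  have hshift := tendsto_add_mul_atTop hψ_small v
  have hγ := tendsto_psiGamma_atTop hψ hψ_mono hinv_right
  refine (tendsto_comp_sub_comp_of_comparable (fun _ => one_pos) hH_meas hH hγ (hγ.comp hshift)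
    one_pos (by simpa using hT) (by simp)).congr' ?_
  filter_upwards [eventually_ge_atTop 1, hshift.eventually (eventually_ge_atTop 1)] with x hx hx'
  simp only [Function.comp_apply, H, gammaInv_max_psiGamma hψ hψ_mono hinv_left hx,
    gammaInv_max_psiGamma hψ hψ_mono hinv_left hx']

end Directions

theorem psi_lcf_iff_comp_gamma_inv_lcf_general (ψ a g γinv : ℝ → ℝ)
    (hψ_one : ∀ x, 1 ≤ ψ x) (hψ_mono : Monotone ψ)
    (hψ_small : Tendsto (fun x => ψ x / x) atTop (𝓝 0))
    (ha_pos : ∀ v : ℝ, 0 < v → 0 < a v)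
    (hA : ∀ v : ℝ, 0 < v → ∀ᶠ x in atTop, a v * ψ x ≤ ψ (x - v * ψ x))
    (hinv_left : ∀ x ≥ (1:ℝ), γinv (∫ t in (1:ℝ)..x, 1 / ψ t) = x)
    (hinv_right : ∀ y ≥ (0:ℝ), (∫ t in (1:ℝ)..(γinv y), 1 / ψ t) = y ∧ 1 ≤ γinv y)
    (hg_pos : ∀ x, 0 < g x) (hg_meas : Measurable g) :
    (∀ v : ℝ, Tendsto (fun x => g (x + v * ψ x) / g x) atTop (𝓝 1)) ↔
      (∀ v : ℝ, Tendsto (fun y => g (γinv (y + v)) / g (γinv y)) atTop (𝓝 1)) := by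
  simp only [tendsto_div_nhds_one_iff_log_sub hg_pos]
  have hG_meas : Measurable fun x => log (g x) := measurable_log.comp hg_meas
  exact ⟨(tendsto_comp_gammaInv_sub_of_psi hψ_one hψ_mono ha_pos hA hinv_right hG_meas :),
    (tendsto_psi_sub_of_comp_gammaInv hψ_one hψ_mono hψ_small ha_pos hA hinv_left
      (fun y hy => (hinv_right y hy).1) hG_meas :)⟩

/-- For `ψ ∈ 𝒦` with `γ(x) = ∫₁^x dt/ψ(t)` and inverse `γinv`:
`g` is a `ψ`-l.c.f. iff `g ∘ γinv` is an l.c.f. -/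
theorem psi_lcf_iff_comp_gamma_inv_lcf (ψ a g γinv : ℝ → ℝ)
    (hψ_one : ∀ x, 1 ≤ ψ x) (hψ_mono : Monotone ψ)
    (hψ_small : Tendsto (fun x => ψ x / x) atTop (𝓝 0))
    (ha_anti : AntitoneOn a (Set.Ioi 0))
    (ha_pos : ∀ v : ℝ, 0 < v → 0 < a v)
    (hA : ∀ v : ℝ, 0 < v → ∀ᶠ x in atTop, a v * ψ x ≤ ψ (x - v * ψ x))
    (ha_int : Tendsto (fun r => ∫ u in (0:ℝ)..r, a u) atTop atTop)
    (hinv_left : ∀ x ≥ (1:ℝ), γinv (∫ t in (1:ℝ)..x, 1 / ψ t) = x)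
    (hinv_right : ∀ y ≥ (0:ℝ), (∫ t in (1:ℝ)..(γinv y), 1 / ψ t) = y ∧ 1 ≤ γinv y)
    (hg_pos : ∀ x, 0 < g x) (hg_meas : Measurable g) :
    (∀ v : ℝ, Tendsto (fun x => g (x + v * ψ x) / g x) atTop (𝓝 1)) ↔
      (∀ v : ℝ, Tendsto (fun y => g (γinv (y + v)) / g (γinv y)) atTop (𝓝 1)) :=
  psi_lcf_iff_comp_gamma_inv_lcf_general ψ a g γinv hψ_one hψ_mono hψ_small ha_pos hA hinv_left
    hinv_right hg_pos hg_meas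
end
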